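/- Let v ∈ (0,1) and let G be a positive random variable. Define α* = sup{ z ≥ 0 : v·E[G^z] < 1 } (possibly ∞). If Y = ∏_{t=1}^T G_t with (G_t) i.i.d. copies of G independent of a geometric T with Pr(T=k) = (1−v)v^k, then E[Y^z] < ∞ for all 0 ≤ z < α* and E[Y^z] = ∞ for all z > α* with v·E[G^z] > 1. -/

import Mathlib

open MeasureTheory ProbabilityTheory ENNReal

/-! Conditioning on the independent stopping time `T` gives
`E[Y^z] = ∑ₖ P(T = k) E[G^z]^k = (1 - v) ∑ₖ φ(z)^k`, which is finite exactly when `φ z < 1`.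
If `z < α*`, pick `p > z` with `φ p < 1`; by weighted AM–GM, `G^z ≤ (1 - z/p) + (z/p) G^p`,
so `φ z ≤ v (1 - z/p) + (z/p) φ p < 1`. -/

section

variable {Ω : Type*} [MeasurableSpace Ω] {μ : Measure Ω}

theorem lintegral_comp_eq_tsum_of_indepFun [IsFiniteMeasure μ] {β : Type*}
    [MeasurableSpace β] {T : Ω → ℕ} {X : Ω → β} (hT : Measurable T) (hX : Measurable X)
    (hTX : IndepFun T X μ) {F : ℕ → β → ℝ≥0∞} (hF : ∀ k, Measurable (F k)) :
    ∫⁻ ω, F (T ω) (X ω) ∂μ = ∑' k, μ {ω | T ω = k} * ∫⁻ ω, F k (X ω) ∂μ := by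
  have hFm : Measurable (Function.uncurry F) := measurable_from_prod_countable_right hF
  rw [show (∫⁻ ω, F (T ω) (X ω) ∂μ) = ∫⁻ ω, Function.uncurry F (T ω, X ω) ∂μ from rfl,
    ← lintegral_map hFm (hT.prodMk hX),
    (indepFun_iff_map_prod_eq_prod_map_map hT.aemeasurable hX.aemeasurable).1 hTX,
    lintegral_prod _ hFm.aemeasurable, lintegral_countable']
  refine tsum_congr fun k => ?_
  simp only [Function.uncurry_apply_pair]
  rw [Measure.map_apply hT (measurableSet_singleton k), lintegral_map (hF k) hX, mul_comm]
  rfl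

theorem lintegral_prod_range_succ_eq_pow {H : ℕ → Ω → ℝ≥0∞} (hH : ∀ t, Measurable (H t))
    (hind : iIndepFun H μ) {m : ℝ≥0∞} (hm : ∀ t, ∫⁻ ω, H t ω ∂μ = m) (k : ℕ) :
    ∫⁻ ω, ∏ t ∈ Finset.range k, H (t + 1) ω ∂μ = m ^ k := by
  rw [lintegral_prod_eq_prod_lintegral_of_indepFun _ _ (hind.precomp Nat.succ_injective)
    fun t => hH (t + 1)]
  simp [hm]

theorem lintegral_prod_range_stopped_eq_tsum {H : ℕ → Ω → ℝ≥0∞} (hH : ∀ t, Measurable (H t))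
    (hind : iIndepFun H μ) {m : ℝ≥0∞} (hm : ∀ t, ∫⁻ ω, H t ω ∂μ = m) {T : Ω → ℕ}
    (hT : Measurable T) (hTH : IndepFun T (fun ω t => H t ω) μ) :
    ∫⁻ ω, ∏ t ∈ Finset.range (T ω), H (t + 1) ω ∂μ = ∑' k, μ {ω | T ω = k} * m ^ k := by
  have := hind.isProbabilityMeasure
  rw [lintegral_comp_eq_tsum_of_indepFun (F := fun k x => ∏ t ∈ Finset.range k, x (t + 1)) hT
    (measurable_pi_lambda _ hH) hTH
    fun k => Finset.measurable_prod _ fun t _ => measurable_pi_apply (t + 1)]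
  simp_rw [lintegral_prod_range_succ_eq_pow hH hind hm]

theorem lintegral_rpow_prod_range_stopped_eq_tsum {G : ℕ → Ω → ℝ}
    (hGm : ∀ t, Measurable (G t)) (hG0 : ∀ t ω, 0 ≤ G t ω) (hiid : iIndepFun G μ)
    (hident : ∀ t, IdentDistrib (G t) (G 1) μ μ) {T : Ω → ℕ} (hT : Measurable T)
    (hTG : IndepFun T (fun ω t => G t ω) μ) (z : ℝ) :
    ∫⁻ ω, ENNReal.ofReal ((∏ t ∈ Finset.range (T ω), G (t + 1) ω) ^ z) ∂μ
      = ∑' k, μ {ω | T ω = k} * (∫⁻ ω, ENNReal.ofReal (G 1 ω ^ z) ∂μ) ^ k := by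
  have hpow : Measurable fun x : ℝ => ENNReal.ofReal (x ^ z) :=
    ENNReal.measurable_ofReal.comp (measurable_id.pow_const z)
  have hprod : ∀ ω, ENNReal.ofReal ((∏ t ∈ Finset.range (T ω), G (t + 1) ω) ^ z)
      = ∏ t ∈ Finset.range (T ω), ENNReal.ofReal (G (t + 1) ω ^ z) := fun ω => by
    rw [← Real.finsetProd_rpow _ _ (fun t _ => hG0 _ ω) z,
      ENNReal.ofReal_prod_of_nonneg fun t _ => Real.rpow_nonneg (hG0 _ ω) z]
  simp_rw [hprod]
  exact lintegral_prod_range_stopped_eq_tsum (fun t => hpow.comp (hGm t))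
    (hiid.comp _ fun _ => hpow) (fun t => ((hident t).comp hpow).lintegral_eq) hT
    (hTG.comp measurable_id (measurable_pi_lambda _ fun t => hpow.comp (measurable_pi_apply t)))

theorem lintegral_ofReal_rpow_mul_le [IsProbabilityMeasure μ] {X : Ω → ℝ}
    (hX : ∀ ω, 0 ≤ X ω) {l : ℝ} (hl0 : 0 ≤ l) (hl1 : l ≤ 1) (p : ℝ) :
    ∫⁻ ω, ENNReal.ofReal (X ω ^ (l * p)) ∂μ
      ≤ ENNReal.ofReal (1 - l) + ENNReal.ofReal l * ∫⁻ ω, ENNReal.ofReal (X ω ^ p) ∂μ := by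
  have hpoint : ∀ ω, X ω ^ (l * p) ≤ (1 - l) + l * X ω ^ p := fun ω => by
    simpa [mul_comm l p, Real.rpow_mul (hX ω)] using
      Real.geom_mean_le_arith_mean2_weighted (sub_nonneg.2 hl1) hl0 zero_le_one
        (Real.rpow_nonneg (hX ω) p) (sub_add_cancel 1 l)
  calc ∫⁻ ω, ENNReal.ofReal (X ω ^ (l * p)) ∂μ
      ≤ ∫⁻ ω, ENNReal.ofReal (1 - l) + ENNReal.ofReal l * ENNReal.ofReal (X ω ^ p) ∂μ := by
        refine lintegral_mono fun ω => ?_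
        rw [← ENNReal.ofReal_mul hl0, ← ENNReal.ofReal_add (sub_nonneg.2 hl1)
          (mul_nonneg hl0 (Real.rpow_nonneg (hX ω) p))]
        exact ENNReal.ofReal_le_ofReal (hpoint ω)
    _ = _ := by
        rw [lintegral_add_left measurable_const, lintegral_const_mul' _ _ ofReal_ne_top,
          lintegral_const, measure_univ, mul_one]

theorem ofReal_mul_lintegral_rpow_lt_one_of_lt [IsProbabilityMeasure μ] {X : Ω → ℝ}
    (hX : ∀ ω, 0 ≤ X ω) {v : ℝ} (hv0 : 0 ≤ v) (hv1 : v < 1) {z p : ℝ} (hz : 0 ≤ z) (hzp : z < p)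
    (hp : ENNReal.ofReal v * ∫⁻ ω, ENNReal.ofReal (X ω ^ p) ∂μ < 1) :
    ENNReal.ofReal v * ∫⁻ ω, ENNReal.ofReal (X ω ^ z) ∂μ < 1 := by
  have hp0 : 0 < p := hz.trans_lt hzp
  set l := z / p
  have hl0 : 0 ≤ l := div_nonneg hz hp0.le
  have hl1 : l < 1 := (div_lt_one hp0).2 hzp
  have hlp : l * p = z := div_mul_cancel₀ z hp0.ne'
  calc ENNReal.ofReal v * ∫⁻ ω, ENNReal.ofReal (X ω ^ z) ∂μ
      ≤ ENNReal.ofReal v * (ENNReal.ofReal (1 - l)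
          + ENNReal.ofReal l * ∫⁻ ω, ENNReal.ofReal (X ω ^ p) ∂μ) := by
        rw [← hlp]
        gcongr
        exact lintegral_ofReal_rpow_mul_le hX hl0 hl1.le p
    _ = ENNReal.ofReal (v * (1 - l))
          + ENNReal.ofReal l * (ENNReal.ofReal v * ∫⁻ ω, ENNReal.ofReal (X ω ^ p) ∂μ) := by
        rw [ENNReal.ofReal_mul hv0]
        ring
    _ < ENNReal.ofReal (1 - l) + ENNReal.ofReal l * 1 := by
        refine ENNReal.add_lt_add_of_lt_of_le
          (mul_ne_top ofReal_ne_top (hp.trans one_lt_top).ne) ?_ ?_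
        · exact (ENNReal.ofReal_lt_ofReal_iff (sub_pos.2 hl1)).2
            (mul_lt_of_lt_one_left (sub_pos.2 hl1) hv1)
        · gcongr
    _ = 1 := by
        rw [mul_one, ← ENNReal.ofReal_add (sub_nonneg.2 hl1.le) hl0, sub_add_cancel,
          ENNReal.ofReal_one]

end

theorem tsum_ofReal_geometric_law_mul_pow {v : ℝ} (hv0 : 0 ≤ v) (hv1 : v ≤ 1) (m : ℝ≥0∞) :
    ∑' k : ℕ, ENNReal.ofReal ((1 - v) * v ^ k) * m ^ k
      = ENNReal.ofReal (1 - v) * (1 - ENNReal.ofReal v * m)⁻¹ := by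
  simp_rw [ENNReal.ofReal_mul (sub_nonneg.2 hv1), ENNReal.ofReal_pow hv0, mul_assoc, ← mul_pow,
    ENNReal.tsum_mul_left, ENNReal.tsum_geometric]

theorem exists_mem_lt_of_ofReal_lt_biSup {s : Set ℝ} {z : ℝ}
    (h : ENNReal.ofReal z < ⨆ x ∈ s, ENNReal.ofReal x) : ∃ x ∈ s, z < x := by
  obtain ⟨x, hx⟩ := lt_iSup_iff.1 h
  obtain ⟨hxs, hzx⟩ := lt_iSup_iff.1 hx
  exact ⟨x, hxs, (ENNReal.ofReal_lt_ofReal_iff'.1 hzx).1⟩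

/-- Moment boundary of the geometrically stopped random product (Beare–Toda):
let `φ z = v * E[G^z]` (with values in `[0,∞]`) and
`α* = ⨆ {z ≥ 0 : φ z < 1}` (in `[0,∞]`). If `Y = ∏_{t=1}^T Gₜ` with `(Gₜ)` i.i.d.
copies of `G = G 1`, independent of a geometric `T` with `Pr(T = k) = (1-v) v^k`,
then `E[Y^z] < ∞` for all `0 ≤ z < α*`, and `E[Y^z] = ∞` for all `z > α*` with
`φ z > 1`. -/
theorem stmt_11 {Ω : Type*} [MeasurableSpace Ω] (μ : Measure Ω) [IsProbabilityMeasure μ]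
    (v : ℝ) (hv : v ∈ Set.Ioo (0 : ℝ) 1)
    (G : ℕ → Ω → ℝ) (hGm : ∀ t, Measurable (G t)) (hGpos : ∀ t ω, 0 < G t ω)
    (hiid : iIndepFun G μ)
    (hident : ∀ t, IdentDistrib (G t) (G 1) μ μ)
    (T : Ω → ℕ) (hTm : Measurable T)
    (hT : ∀ k : ℕ, μ {ω | T ω = k} = ENNReal.ofReal ((1 - v) * v ^ k))
    (hTindep : IndepFun T (fun ω => fun t => G t ω) μ)
    (φ : ℝ → ℝ≥0∞)
    (hφ : ∀ z, φ z = ENNReal.ofReal v * ∫⁻ ω, ENNReal.ofReal (G 1 ω ^ z) ∂μ)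
    (αstar : ℝ≥0∞) (hαstar : αstar = ⨆ z ∈ {z : ℝ | 0 ≤ z ∧ φ z < 1}, ENNReal.ofReal z)
    (Y : Ω → ℝ) (hY : ∀ ω, Y ω = ∏ t ∈ Finset.range (T ω), G (t + 1) ω) :
    (∀ z : ℝ, 0 ≤ z → ENNReal.ofReal z < αstar →
      ∫⁻ ω, ENNReal.ofReal (Y ω ^ z) ∂μ < ⊤) ∧
    (∀ z : ℝ, αstar < ENNReal.ofReal z → 1 < φ z →
      ∫⁻ ω, ENNReal.ofReal (Y ω ^ z) ∂μ = ⊤) := by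
  obtain ⟨hv0, hv1⟩ := hv
  have hG0 : ∀ t ω, 0 ≤ G t ω := fun t ω => (hGpos t ω).le
  have hmoment : ∀ z, ∫⁻ ω, ENNReal.ofReal (Y ω ^ z) ∂μ
      = ENNReal.ofReal (1 - v) * (1 - φ z)⁻¹ := fun z => by
    simp_rw [hY, lintegral_rpow_prod_range_stopped_eq_tsum hGm hG0 hiid hident hTm hTindep, hT,
      hφ]
    exact tsum_ofReal_geometric_law_mul_pow hv0.le hv1.le _
  refine ⟨fun z hz hzα => ?_, fun z _ hφz => ?_⟩
  · obtain ⟨p, ⟨-, hφp⟩, hzp⟩ := exists_mem_lt_of_ofReal_lt_biSup (hαstar ▸ hzα)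
    have hφz : φ z < 1 := by
      rw [hφ] at hφp ⊢
      exact ofReal_mul_lintegral_rpow_lt_one_of_lt (hG0 1) hv0.le hv1 hz hzp hφp
    rw [hmoment]
    exact mul_lt_top ofReal_lt_top (inv_lt_top.2 (tsub_pos_of_lt hφz))
  · rw [hmoment, tsub_eq_zero_of_le hφz.le, inv_zero,
      mul_top (ofReal_pos.2 (sub_pos.2 hv1)).ne']
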